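/- For any bipartite base-pair-sum energy model M and any energy distance Δ > 0: if a sequence w is a Δ-design for a structure S, then for every integer k ≥ 1, the k-stutter w^[k] is a Δ-design for the k-stutter S^[k]. -/

import Mathlib

open scoped Classical

/-- An RNA nucleotide. -/
inductive Base | A | U | C | G
deriving DecidableEq, Inhabited, Repr

/-- The Watson-Crick pairing relation (only G-C and A-U pairs allowed). -/
def wcPair : Base → Base → Prop
  | .G, .C => True | .C, .G => True
  | .A, .U => True | .U, .A => True
  | _, _ => False

/-- The Nussinov-Jacobson pairing relation (G-C, A-U and G-U pairs allowed). -/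
def njPair : Base → Base → Prop
  | .G, .C => True | .C, .G => True
  | .A, .U => True | .U, .A => True
  | .G, .U => True | .U, .G => True
  | _, _ => False

/-- An RNA (pseudoknot-free) secondary structure, 0-indexed positions. -/
structure SecStr where
  len : ℕ
  pairs : Finset (ℕ × ℕ)
  lt : ∀ p ∈ pairs, p.1 < p.2
  ub : ∀ p ∈ pairs, p.2 < len
  once : ∀ p ∈ pairs, ∀ q ∈ pairs, p ≠ q →
    p.1 ≠ q.1 ∧ p.1 ≠ q.2 ∧ p.2 ≠ q.1 ∧ p.2 ≠ q.2
  noncross : ∀ p ∈ pairs, ∀ q ∈ pairs,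
    ¬ (p.1 < q.1 ∧ q.1 < p.2 ∧ p.2 < q.2)

def SecStr.pairedAt (S : SecStr) (i : ℕ) : Prop := ∃ p ∈ S.pairs, p.1 = i ∨ p.2 = i
def SecStr.unpairedAt (S : SecStr) (i : ℕ) : Prop := i < S.len ∧ ¬ S.pairedAt i
def SecStr.saturated (S : SecStr) : Prop := ∀ i < S.len, S.pairedAt i

/-- A structure is compatible with a sequence `w` (w.r.t. pairing relation `R`)
if it has the right length and all base pairs are `R`-valid. -/
def compat {α : Type*} [Inhabited α] (R : α → α → Prop) (w : List α) (S : SecStr) : Prop :=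
  S.len = w.length ∧ ∀ p ∈ S.pairs, R (w.getD p.1 default) (w.getD p.2 default)

/-- Base-pair-sum free energy of a structure on a sequence. -/
noncomputable def energy {α : Type*} [Inhabited α] (E : α → α → ℝ) (w : List α)
    (S : SecStr) : ℝ :=
  ∑ p ∈ S.pairs, E (w.getD p.1 default) (w.getD p.2 default)

/-- `w` is a Δ-design for `S`: `S` is compatible with `w`, and every other
compatible structure has energy at least `energy E w S + Δ`. -/
def isDesign {α : Type*} [Inhabited α] (R : α → α → Prop) (E : α → α → ℝ) (Δ : ℝ)
    (w : List α) (S : SecStr) : Prop :=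
  compat R w S ∧ ∀ S' : SecStr, compat R w S' → S' ≠ S →
    energy E w S' ≥ energy E w S + Δ

/- Tree representation machinery. -/
def encloses (q p : ℕ × ℕ) : Prop := q.1 < p.1 ∧ p.2 < q.2
def SecStr.hasParent (S : SecStr) (p : ℕ × ℕ) : Prop := ∃ q ∈ S.pairs, encloses q p
def SecStr.isParentOf (S : SecStr) (q p : ℕ × ℕ) : Prop :=
  q ∈ S.pairs ∧ p ∈ S.pairs ∧ encloses q p ∧ ¬ ∃ m ∈ S.pairs, encloses q m ∧ encloses m p

/-- Degree of a paired node: number of paired children plus one for the parent (if any). -/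
noncomputable def SecStr.pairDeg (S : SecStr) (p : ℕ × ℕ) : ℕ :=
  (S.pairs.filter (fun c => S.isParentOf p c)).card + (if S.hasParent p then 1 else 0)
/-- Degree of the virtual root: number of top-level base pairs. -/
noncomputable def SecStr.rootDeg (S : SecStr) : ℕ :=
  (S.pairs.filter (fun p => ¬ S.hasParent p)).card
/-- All nodes of the tree representation (including the virtual root) have degree ≤ d. -/
def SecStr.degLE (S : SecStr) (d : ℕ) : Prop :=
  S.rootDeg ≤ d ∧ ∀ p ∈ S.pairs, S.pairDeg p ≤ d

/-- A sequence is saturable if a saturated structure is compatible with it. -/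
def saturable {α : Type*} [Inhabited α] (R : α → α → Prop) (w : List α) : Prop :=
  ∃ S : SecStr, compat R w S ∧ S.saturated
/-- Atomic saturable: saturable, and no (nonempty) proper prefix is saturable. -/
def atomicSaturable {α : Type*} [Inhabited α] (R : α → α → Prop) (w : List α) : Prop :=
  saturable R w ∧ ∀ k, 0 < k → k < w.length → ¬ saturable R (w.take k)

/- Motifs. -/
def SecStr.unpChildOfPair (S : SecStr) (q : ℕ × ℕ) (u : ℕ) : Prop :=
  S.unpairedAt u ∧ q.1 < u ∧ u < q.2 ∧
    ¬ ∃ m ∈ S.pairs, q.1 < m.1 ∧ m.1 < u ∧ u < m.2 ∧ m.2 < q.2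
def SecStr.unpChildOfRoot (S : SecStr) (u : ℕ) : Prop :=
  S.unpairedAt u ∧ ¬ ∃ m ∈ S.pairs, m.1 < u ∧ u < m.2
/-- Motif m₅ : a tree node (possibly the root) of degree greater than four. -/
def hasM5 (S : SecStr) : Prop := 4 < S.rootDeg ∨ ∃ p ∈ S.pairs, 4 < S.pairDeg p
/-- Motif m₃∘ : a node with an unpaired child and degree greater than two. -/
def hasM3o (S : SecStr) : Prop :=
  (∃ q ∈ S.pairs, (∃ u, S.unpChildOfPair q u) ∧ 2 < S.pairDeg q) ∨
  ((∃ u, S.unpChildOfRoot u) ∧ 2 < S.rootDeg)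

/- Colorings of the tree representation. -/
inductive Col | black | white | gray
deriving DecidableEq

noncomputable def childCount (S : SecStr) (col : ℕ × ℕ → Col) (q : ℕ × ℕ) (c : Col) : ℕ :=
  (S.pairs.filter (fun p => S.isParentOf q p ∧ col p = c)).card
noncomputable def rootChildCount (S : SecStr) (col : ℕ × ℕ → Col) (c : Col) : ℕ :=
  (S.pairs.filter (fun p => ¬ S.hasParent p ∧ col p = c)).card

/-- A proper coloring of the tree representation. -/
def properCol (S : SecStr) (col : ℕ × ℕ → Col) : Prop :=
  rootChildCount S col .black ≤ 1 ∧ rootChildCount S col .white ≤ 1 ∧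
  rootChildCount S col .gray ≤ 2 ∧
  ∀ q ∈ S.pairs,
    childCount S col q .black ≤ 1 ∧ childCount S col q .white ≤ 1 ∧
    childCount S col q .gray ≤ 2 ∧
    childCount S col q (col q) ≤ 1 ∧
    (col q = .black → ∀ p ∈ S.pairs, S.isParentOf q p → col p ≠ .white) ∧
    (col q = .white → ∀ p ∈ S.pairs, S.isParentOf q p → col p ≠ .black)

/-- Level of a paired node: #black minus #white on the path to the root (incl. itself). -/
noncomputable def pairLvl (S : SecStr) (col : ℕ × ℕ → Col) (p : ℕ × ℕ) : ℤ :=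
  ((S.pairs.filter (fun q => q.1 ≤ p.1 ∧ p.2 ≤ q.2 ∧ col q = .black)).card : ℤ) -
  ((S.pairs.filter (fun q => q.1 ≤ p.1 ∧ p.2 ≤ q.2 ∧ col q = .white)).card : ℤ)
/-- Level of an unpaired node. -/
noncomputable def unpLvl (S : SecStr) (col : ℕ × ℕ → Col) (u : ℕ) : ℤ :=
  ((S.pairs.filter (fun q => q.1 < u ∧ u < q.2 ∧ col q = .black)).card : ℤ) -
  ((S.pairs.filter (fun q => q.1 < u ∧ u < q.2 ∧ col q = .white)).card : ℤ)

/-- Separated coloring: gray-node levels and unpaired-node levels are disjoint. -/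
def separatedCol (S : SecStr) (col : ℕ × ℕ → Col) : Prop :=
  ∀ p ∈ S.pairs, col p = .gray → ∀ u, S.unpairedAt u →
    pairLvl S col p ≠ unpLvl S col u

/-- A bipartite energy model: its compatibility graph is bipartite. -/
def Bipartite {α : Type*} (R : α → α → Prop) : Prop :=
  ∃ f : α → Bool, ∀ a b, R a b → f a ≠ f b

/-- The k-stutter of a sequence. -/
def stutterSeq {α : Type*} (w : List α) (k : ℕ) : List α :=
  w.flatMap (fun a => List.replicate k a)
/-- The base pairs of the k-stutter of a structure. -/
def stutterPairs (S : SecStr) (k : ℕ) : Finset (ℕ × ℕ) :=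
  S.pairs.biUnion (fun p => (Finset.range k).image
    (fun m => (k * p.1 + m, k * p.2 + (k - 1 - m))))

/-- Two base pairs belong to the same band (maximal stack) of S. -/
def sameBand (S : SecStr) (p p' : ℕ × ℕ) : Prop :=
  p ∈ S.pairs ∧ p' ∈ S.pairs ∧ p.1 + p.2 = p'.1 + p'.2 ∧
  ∀ x, min p.1 p'.1 ≤ x → x ≤ max p.1 p'.1 → (x, p.1 + p.2 - x) ∈ S.pairs

/-- Nussinov-Jacobson energies: a for G-C, b for A-U, g for G-U. -/
def njE (a b g : ℝ) : Base → Base → ℝ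
  | .G, .C => a | .C, .G => a
  | .A, .U => b | .U, .A => b
  | .G, .U => g | .U, .G => g
  | _, _ => 0

/-- level of position i : #G minus #C in the prefix of w ending at i. -/
def lvl (w : List Base) (i : ℕ) : ℤ :=
  ((w.take (i+1)).count Base.G : ℤ) - ((w.take (i+1)).count Base.C : ℤ)

open Finset

/-!
Project each base pair `(i, j)` of a structure `S'` compatible with `w^[k]` to `(i / k, j / k)`.
Every position of `w` has `k` copies in `w^[k]`, each paired at most once, so the projected pairs
form a multigraph on the positions of `w` of maximum degree `k`, bipartite because the energy
model is. By König's theorem its edges split into `k` matchings; each is a secondary structure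
`T γ` compatible with `w` (the projection is monotone, so pairs stay non-crossing), and
`E(w^[k], S') = ∑ γ, E(w, T γ) ≥ k E(w, S)`, with an extra `Δ` unless every `T γ = S`. In that
last case every pair of `S` has `k` preimages filling two blocks of `w^[k]`, and non-crossing
forces them to be the stack that `S^[k]` puts there, so `S' = S^[k]`.
-/

section EdgeColoring

variable {ι V κ : Type*} (ends : ι → V × V)

def Incident (p : ι) (x : V) : Prop := (ends p).1 = x ∨ (ends p).2 = x

def IsProperEdgeColoring (P : Finset ι) (c : ι → κ) : Prop :=
  ∀ p ∈ P, ∀ q ∈ P, p ≠ q → ∀ x, Incident ends p x → Incident ends q x → c p ≠ c q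

def IsMissingColor (P : Finset ι) (c : ι → κ) (γ : κ) (x : V) : Prop :=
  ∀ p ∈ P, Incident ends p x → c p ≠ γ

variable {ends}

lemma IsProperEdgeColoring.injOn_filter [DecidableEq κ] {P : Finset ι} {c : ι → κ}
    (hc : IsProperEdgeColoring ends P c) (γ : κ) : Set.InjOn ends (P.filter (c · = γ)) := by
  intro p hp q hq hpq
  by_contra hne
  simp only [coe_filter, Set.mem_ofPred_eq] at hp hq
  exact hc p hp.1 q hq.1 hne (ends p).1 (Or.inl rfl) (Or.inl (by rw [hpq])) (hp.2.trans hq.2.symm)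

lemma exists_isMissingColor [Fintype κ] {P : Finset ι} (c : ι → κ) {x : V}
    (hx : #(P.filter (Incident ends · x)) < Fintype.card κ) : ∃ γ, IsMissingColor ends P c γ x := by
  obtain ⟨γ, -, hγ⟩ := exists_mem_notMem_of_card_lt_card
    (s := (P.filter (Incident ends · x)).image c) (t := univ) (card_image_le.trans_lt hx)
  exact ⟨γ, fun p hp hpx hcp => hγ (mem_image.2 ⟨p, mem_filter.2 ⟨hp, hpx⟩, hcp⟩)⟩

lemma IsProperEdgeColoring.update_insert [DecidableEq ι] {P : Finset ι} {e : ι} {c : ι → κ}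
    {γ : κ} (hc : IsProperEdgeColoring ends P c) (he : e ∉ P)
    (h₁ : IsMissingColor ends P c γ (ends e).1) (h₂ : IsMissingColor ends P c γ (ends e).2) :
    IsProperEdgeColoring ends (insert e P) (Function.update c e γ) := by
  have hmiss : ∀ q ∈ P, ∀ x, Incident ends e x → Incident ends q x → c q ≠ γ := by
    rintro q hq x (rfl | rfl) hqx
    exacts [h₁ q hq hqx, h₂ q hq hqx]
  have hne : ∀ q ∈ P, q ≠ e := fun q hq hqe => he (hqe ▸ hq)
  intro p hp q hq hpq x hpx hqx
  rcases mem_insert.1 hp with rfl | hp' <;> rcases mem_insert.1 hq with rfl | hq'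
  · exact absurd rfl hpq
  · rw [Function.update_self, Function.update_of_ne (hne q hq')]
    exact (hmiss q hq' x hpx hqx).symm
  · rw [Function.update_self, Function.update_of_ne (hne p hp')]
    exact hmiss p hp' x hqx hpx
  · rw [Function.update_of_ne (hne p hp'), Function.update_of_ne (hne q hq')]
    exact hc p hp' q hq' hpq x hpx hqx

variable (ends) (side : V → Bool) (P : Finset ι) (c : ι → κ) (α β : κ) (u : V)

/-- Vertices reached from `u` by a path whose edges are coloured `β, α, β, …`. As edges join the
two sides, such a path enters the vertices on the side of `u` by `α`-edges, the others by
`β`-edges. -/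
inductive KempeReach : V → Prop
  | base : KempeReach u
  | step {p : ι} {z x : V} : p ∈ P → ends p = (z, x) ∨ ends p = (x, z) →
      c p = (if side x = side u then α else β) → KempeReach z → KempeReach x

variable {ends side P c α β u}

/-- Along an `α`/`β`-edge the reach propagates: if the edge were the one by which its endpoint
`x` was entered, its other endpoint would be the vertex `x` was entered from. -/
lemma KempeReach.of_ends (hc : IsProperEdgeColoring ends P c)
    (hside : ∀ p ∈ P, side (ends p).1 ≠ side (ends p).2) (hα : IsMissingColor ends P c α u)
    {p : ι} (hp : p ∈ P) (hcp : c p = α ∨ c p = β) {x y : V}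
    (hxy : ends p = (x, y) ∨ ends p = (y, x)) (hx : KempeReach ends side P c α β u x) :
    KempeReach ends side P c α β u y := by
  have hsxy : side x ≠ side y := by
    rcases hxy with h | h <;> have := hside p hp <;> rw [h] at this
    exacts [this, this.symm]
  have hcol : c p = (if side y = side u then α else β) ∨
      c p = (if side x = side u then α else β) := by
    cases hx' : side x <;> cases hy' : side y <;> cases hu' : side u <;> simp_all [or_comm]
  rcases hcol with hcol | hcol
  · exact .step hp hxy hcol hx
  cases hx with
  | base =>
    rw [if_pos rfl] at hcol
    exact absurd hcol (hα p hp (by rcases hxy with h | h <;> simp [Incident, h]))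
  | @step q z _ hq hqends hcq hz =>
    have hpq : p = q := by
      by_contra hne
      refine hc p hp q hq hne x ?_ ?_ (hcol.trans hcq.symm) <;>
        simp only [Incident] <;> aesop
    subst hpq
    have : y = z := by rcases hxy with h | h <;> rcases hqends with h' | h' <;> simp_all
    exact this ▸ hz

lemma KempeReach.fst_iff_snd (hc : IsProperEdgeColoring ends P c)
    (hside : ∀ p ∈ P, side (ends p).1 ≠ side (ends p).2) (hα : IsMissingColor ends P c α u)
    {p : ι} (hp : p ∈ P) (hcp : c p = α ∨ c p = β) :
    KempeReach ends side P c α β u (ends p).1 ↔ KempeReach ends side P c α β u (ends p).2 :=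
  ⟨.of_ends hc hside hα hp hcp (Or.inl rfl), .of_ends hc hside hα hp hcp (Or.inr rfl)⟩

lemma not_kempeReach {v : V}
    (huv : side u ≠ side v) (hβ : IsMissingColor ends P c β v) :
    ¬ KempeReach ends side P c α β u v := by
  rintro (_ | ⟨hq, hqends, hcq, -⟩)
  · exact huv rfl
  · rw [if_neg (Ne.symm huv)] at hcq
    exact hβ _ hq (by rcases hqends with h | h <;> simp [Incident, h]) hcq

lemma IsProperEdgeColoring.exists_common_isMissingColor [DecidableEq κ]
    (hc : IsProperEdgeColoring ends P c)
    (hside : ∀ p ∈ P, side (ends p).1 ≠ side (ends p).2) {u v : V} (huv : side u ≠ side v)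
    {α β : κ} (hα : IsMissingColor ends P c α u) (hβ : IsMissingColor ends P c β v) :
    ∃ c', IsProperEdgeColoring ends P c' ∧ IsMissingColor ends P c' β u ∧
      IsMissingColor ends P c' β v := by
  by_cases hαβ : α = β
  · subst hαβ
    exact ⟨c, hc, hα, hβ⟩
  set Reach := KempeReach ends side P c α β u
  -- interchange `α` and `β` on the component of `u` in the `α`/`β`-subgraph
  set swapped : ι → Prop := fun p => (c p = α ∨ c p = β) ∧ Reach (ends p).1
  have reach_of_swapped : ∀ p ∈ P, swapped p → ∀ x, Incident ends p x → Reach x := by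
    rintro p hp ⟨hcp, hr⟩ x (rfl | rfl)
    exacts [hr, (KempeReach.fst_iff_snd hc hside hα hp hcp).1 hr]
  have swapped_of_reach : ∀ p ∈ P, (c p = α ∨ c p = β) → ∀ x, Incident ends p x → Reach x →
      swapped p := by
    rintro p hp hcp x (rfl | rfl) hx
    exacts [⟨hcp, hx⟩, ⟨hcp, (KempeReach.fst_iff_snd hc hside hα hp hcp).2 hx⟩]
  set c' : ι → κ := fun p => if swapped p then Equiv.swap α β (c p) else c p
  have swap_mem : ∀ γ, (γ = α ∨ γ = β) → (Equiv.swap α β γ = α ∨ Equiv.swap α β γ = β) := by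
    rintro γ (rfl | rfl) <;> simp
  have mixed : ∀ p ∈ P, ∀ q ∈ P, ∀ x, Incident ends p x → Incident ends q x →
      swapped p → ¬ swapped q → c' p ≠ c' q := by
    intro p hp q hq x hpx hqx hsp hsq hpq
    simp only [c', if_pos hsp, if_neg hsq] at hpq
    exact hsq (swapped_of_reach q hq (hpq ▸ swap_mem _ hsp.1) x hqx
      (reach_of_swapped p hp hsp x hpx))
  refine ⟨c', ?_, ?_, ?_⟩
  · intro p hp q hq hpq x hpx hqx
    by_cases hsp : swapped p <;> by_cases hsq : swapped q
    · simp only [c', if_pos hsp, if_pos hsq]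
      exact (Equiv.swap α β).injective.ne (hc p hp q hq hpq x hpx hqx)
    · exact mixed p hp q hq x hpx hqx hsp hsq
    · exact (mixed q hq p hp x hqx hpx hsq hsp).symm
    · simp only [c', if_neg hsp, if_neg hsq]
      exact hc p hp q hq hpq x hpx hqx
  · intro p hp hpu
    by_cases hsp : swapped p
    · have hcp : c p = β := hsp.1.resolve_left (hα p hp hpu)
      simp only [c', if_pos hsp, hcp, Equiv.swap_apply_right]
      exact hαβ
    · simp only [c', if_neg hsp]
      exact fun hcp => hsp (swapped_of_reach p hp (Or.inr hcp) u hpu .base)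
  · intro p hp hpv
    have hsp : ¬ swapped p := fun hsp =>
      not_kempeReach huv hβ (reach_of_swapped p hp hsp v hpv)
    simp only [c', if_neg hsp]
    exact hβ p hp hpv

/-- König's edge-colouring theorem for bipartite multigraphs. -/
theorem exists_isProperEdgeColoring [DecidableEq ι] {k : ℕ} (hk : 0 < k) (side : V → Bool)
    (P : Finset ι) (hside : ∀ p ∈ P, side (ends p).1 ≠ side (ends p).2)
    (hdeg : ∀ x, #(P.filter (Incident ends · x)) ≤ k) :
    ∃ c : ι → Fin k, IsProperEdgeColoring ends P c := by
  induction P using Finset.induction_on with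
  | empty => exact ⟨fun _ => ⟨0, hk⟩, fun p hp => absurd hp (notMem_empty p)⟩
  | insert e P he ih =>
    obtain ⟨c, hc⟩ := ih (fun p hp => hside p (mem_insert_of_mem hp))
      (fun x => (card_le_card (filter_subset_filter _ (subset_insert e P))).trans (hdeg x))
    have hfree : ∀ x, Incident ends e x →
        #(P.filter (Incident ends · x)) < Fintype.card (Fin k) := by
      intro x hx
      have := hdeg x
      rwa [filter_insert, if_pos hx, card_insert_of_notMem (fun h => he (mem_filter.1 h).1),
        Nat.add_one_le_iff, ← Fintype.card_fin k] at this
    obtain ⟨α, hα⟩ := exists_isMissingColor c (hfree _ (Or.inl rfl))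
    obtain ⟨β, hβ⟩ := exists_isMissingColor c (hfree _ (Or.inr rfl))
    obtain ⟨c', hc', hu, hv⟩ := hc.exists_common_isMissingColor
      (fun p hp => hside p (mem_insert_of_mem hp)) (hside e (mem_insert_self e P)) hα hβ
    exact ⟨Function.update c' e β, hc'.update_insert he hu hv⟩

end EdgeColoring

section Stutter

variable {α : Type*}

lemma length_stutterSeq (w : List α) (k : ℕ) : (stutterSeq w k).length = k * w.length := by
  simp [stutterSeq, List.length_flatMap, mul_comm]

lemma getD_stutterSeq (w : List α) {k : ℕ} (hk : 0 < k) (i : ℕ) (d : α) :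
    (stutterSeq w k).getD i d = w.getD (i / k) d := by
  induction w generalizing i with
  | nil => simp [stutterSeq]
  | cons a t ih =>
    rw [stutterSeq, List.flatMap_cons]
    rcases lt_or_ge i k with hi | hi
    · rw [List.getD_append _ _ _ _ (by simpa using hi), Nat.div_eq_of_lt hi]
      simp [List.getD_eq_getElem?_getD, hi]
    · rw [List.getD_append_right _ _ _ _ (by simpa using hi), List.length_replicate,
        Nat.div_eq_sub_div hk hi]
      exact ih (i - k)

def divPair (k : ℕ) (p : ℕ × ℕ) : ℕ × ℕ := (p.1 / k, p.2 / k)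

variable [Inhabited α]

lemma compat_stutterSeq_iff {R : α → α → Prop} {w : List α} {k : ℕ} (hk : 0 < k) {S : SecStr} :
    compat R (stutterSeq w k) S ↔ S.len = k * w.length ∧
      ∀ p ∈ S.pairs, R (w.getD (divPair k p).1 default) (w.getD (divPair k p).2 default) := by
  simp only [compat, length_stutterSeq, getD_stutterSeq w hk, divPair]

lemma energy_stutterSeq (E : α → α → ℝ) (w : List α) {k : ℕ} (hk : 0 < k) (S : SecStr) :
    energy E (stutterSeq w k) S =
      ∑ p ∈ S.pairs, E (w.getD (divPair k p).1 default) (w.getD (divPair k p).2 default) := by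
  simp only [energy, getD_stutterSeq w hk, divPair]

def stutterCell (k : ℕ) (p : ℕ × ℕ) : Finset (ℕ × ℕ) :=
  (range k).image (fun m => (k * p.1 + m, k * p.2 + (k - 1 - m)))

lemma stutterPairs_eq_biUnion (S : SecStr) (k : ℕ) :
    stutterPairs S k = S.pairs.biUnion (stutterCell k) := rfl

lemma divPair_of_mem_stutterCell {k : ℕ} {p r : ℕ × ℕ} (hr : r ∈ stutterCell k p) :
    divPair k r = p := by
  obtain ⟨m, hm, rfl⟩ := mem_image.1 hr
  have hm := mem_range.1 hm
  have hdiv : ∀ x n, n < k → (k * x + n) / k = x := fun x n hn => by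
    rw [Nat.mul_add_div (by omega), Nat.div_eq_of_lt hn, add_zero]
  simp only [divPair, hdiv _ _ hm, hdiv _ _ (show k - 1 - m < k by omega)]

lemma card_stutterCell (k : ℕ) (p : ℕ × ℕ) : #(stutterCell k p) = k := by
  rw [stutterCell, card_image_of_injective _ fun m m' h => by simpa using congrArg Prod.fst h,
    card_range]

lemma compat_stutterSeq_of_pairs_eq {R : α → α → Prop} {w : List α} {k : ℕ} (hk : 0 < k)
    {S Sk : SecStr} (hS : compat R w S) (hlen : Sk.len = k * S.len)
    (hpairs : Sk.pairs = stutterPairs S k) : compat R (stutterSeq w k) Sk := by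
  refine (compat_stutterSeq_iff hk).2 ⟨by rw [hlen, hS.1], fun r hr => ?_⟩
  rw [hpairs, stutterPairs_eq_biUnion, mem_biUnion] at hr
  obtain ⟨q, hq, hr⟩ := hr
  rw [divPair_of_mem_stutterCell hr]
  exact hS.2 q hq

lemma energy_stutterSeq_of_pairs_eq (E : α → α → ℝ) (w : List α) {k : ℕ} (hk : 0 < k)
    {S Sk : SecStr} (hpairs : Sk.pairs = stutterPairs S k) :
    energy E (stutterSeq w k) Sk = k * energy E w S := by
  have hdisj : (S.pairs : Set (ℕ × ℕ)).PairwiseDisjoint (stutterCell k) :=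
    fun q _ q' _ hne => disjoint_left.2 fun r hr hr' =>
      hne ((divPair_of_mem_stutterCell hr).symm.trans (divPair_of_mem_stutterCell hr'))
  rw [energy_stutterSeq E w hk, hpairs, stutterPairs_eq_biUnion, sum_biUnion hdisj, energy,
    mul_sum]
  refine sum_congr rfl fun q _ => ?_
  rw [sum_congr rfl fun r hr => by rw [divPair_of_mem_stutterCell hr], sum_const,
    card_stutterCell, nsmul_eq_mul]

end Stutter

lemma image_eq_Ico_of_injOn {β : Type*} {A : Finset β} {f : β → ℕ} {x₀ k : ℕ}
    (hinj : Set.InjOn f A) (hmaps : ∀ p ∈ A, f p ∈ Ico x₀ (x₀ + k)) (hcard : k ≤ #A) :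
    A.image f = Ico x₀ (x₀ + k) :=
  eq_of_subset_of_card_le (image_subset_iff.2 hmaps)
    (by rw [Nat.card_Ico, card_image_of_injOn hinj]; omega)

/-- The pairs `q` with `q.1 < r.1` are exactly those with `r.2 < q.2`; counting them by their left
and by their right ends gives `r.1 - x₀ = y₀ + k - 1 - r.2`. -/
lemma add_eq_of_image_eq_Ico {A : Finset (ℕ × ℕ)} {x₀ y₀ k : ℕ}
    (hinj : Set.InjOn Prod.fst (A : Set (ℕ × ℕ)))
    (hfst : A.image Prod.fst = Ico x₀ (x₀ + k)) (hsnd : A.image Prod.snd = Ico y₀ (y₀ + k))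
    (hanti : ∀ p ∈ A, ∀ q ∈ A, p.1 < q.1 → q.2 < p.2) {r : ℕ × ℕ} (hr : r ∈ A) :
    r.1 + r.2 + 1 = x₀ + y₀ + k := by
  have hsndinj : Set.InjOn Prod.snd (A : Set (ℕ × ℕ)) := by
    intro p hp q hq h
    rcases lt_trichotomy p.1 q.1 with hlt | heq | hgt
    · exact absurd h (hanti p hp q hq hlt).ne'
    · exact hinj hp hq heq
    · exact absurd h (hanti q hq p hp hgt).ne
  have hbelow : A.filter (·.1 < r.1) = A.filter (r.2 < ·.2) := by
    ext q
    simp only [mem_filter, and_congr_right_iff]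
    intro hq
    refine ⟨hanti q hq r hr, fun h => ?_⟩
    rcases lt_trichotomy q.1 r.1 with hlt | heq | hgt
    · exact hlt
    · exact absurd h (by rw [hinj hq hr heq]; exact lt_irrefl _)
    · exact absurd h (hanti r hr q hq hgt).not_gt
  have hr₁ : r.1 ∈ Ico x₀ (x₀ + k) := hfst ▸ mem_image_of_mem _ hr
  have hr₂ : r.2 ∈ Ico y₀ (y₀ + k) := hsnd ▸ mem_image_of_mem _ hr
  rw [mem_Ico] at hr₁ hr₂
  have hleft : #(A.filter (·.1 < r.1)) = r.1 - x₀ := by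
    rw [← card_image_of_injOn (hinj.mono (filter_subset _ _)), ← filter_image (p := (· < r.1)),
      hfst,
      show (Ico x₀ (x₀ + k)).filter (· < r.1) = Ico x₀ r.1 by ext; simp; omega, Nat.card_Ico]
  have hright : #(A.filter (r.2 < ·.2)) = y₀ + k - (r.2 + 1) := by
    rw [← card_image_of_injOn (hsndinj.mono (filter_subset _ _)),
      ← filter_image (p := (r.2 < ·)), hsnd,
      show (Ico y₀ (y₀ + k)).filter (r.2 < ·) = Ico (r.2 + 1) (y₀ + k) by ext; simp; omega,
      Nat.card_Ico]
  rw [hbelow] at hleft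
  omega

namespace SecStr

lemma ext {S T : SecStr} (hlen : S.len = T.len) (hpairs : S.pairs = T.pairs) : S = T := by
  cases S; cases T; simp_all

lemma card_filter_le (S : SecStr) (X : Finset ℕ) :
    #(S.pairs.filter (fun p => p.1 ∈ X ∨ p.2 ∈ X)) ≤ #X := by
  refine card_le_card_of_injOn (fun p => if p.1 ∈ X then p.1 else p.2) ?_ ?_
  · intro p hp
    simp only [coe_filter, Set.mem_ofPred_eq] at hp
    dsimp only
    split_ifs with h
    exacts [h, hp.2.resolve_left h]
  · intro p hp q hq hpq
    by_contra hne
    simp only [coe_filter, Set.mem_ofPred_eq] at hp hq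
    obtain ⟨h₁, h₂, h₃, h₄⟩ := S.once p hp.1 q hq.1 hne
    simp only at hpq
    split_ifs at hpq <;> contradiction

lemma card_filter_incident_divPair_le (S : SecStr) {k : ℕ} (hk : 0 < k) (x : ℕ) :
    #(S.pairs.filter (Incident (divPair k) · x)) ≤ k := by
  have hblock : ∀ i, i / k = x ↔ i ∈ Ico (k * x) (k * x + k) := fun i => by
    rw [Nat.div_eq_iff hk, mem_Ico, mul_comm x k]
    omega
  simpa [Incident, divPair, hblock] using S.card_filter_le (Ico (k * x) (k * x + k))


lemma exists_pairs_eq_image_filter {κ : Type*} [DecidableEq κ] (S : SecStr) {k n : ℕ}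
    (hlen : S.len = k * n)
    {c : ℕ × ℕ → κ} (hc : IsProperEdgeColoring (divPair k) S.pairs c)
    (hloop : ∀ p ∈ S.pairs, (divPair k p).1 ≠ (divPair k p).2) (γ : κ) :
    ∃ T : SecStr, T.len = n ∧ T.pairs = (S.pairs.filter (c · = γ)).image (divPair k) := by
  set Q := S.pairs.filter (c · = γ)
  have hQ : ∀ p ∈ Q, p ∈ S.pairs := fun p hp => (mem_filter.1 hp).1
  have hmatch : ∀ p ∈ Q, ∀ q ∈ Q, p ≠ q → ∀ x,
      ¬ (Incident (divPair k) p x ∧ Incident (divPair k) q x) := by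
    intro p hp q hq hpq x ⟨hpx, hqx⟩
    exact hc p (hQ p hp) q (hQ q hq) hpq x hpx hqx
      ((mem_filter.1 hp).2.trans (mem_filter.1 hq).2.symm)
  refine ⟨⟨n, Q.image (divPair k), ?_, ?_, ?_, ?_⟩, rfl, rfl⟩
  · simp only [mem_image]
    rintro _ ⟨p, hp, rfl⟩
    exact (Nat.div_le_div_right (S.lt p (hQ p hp)).le).lt_of_ne (hloop p (hQ p hp))
  · simp only [mem_image]
    rintro _ ⟨p, hp, rfl⟩
    exact Nat.div_lt_of_lt_mul (hlen ▸ S.ub p (hQ p hp))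
  · simp only [mem_image]
    rintro _ ⟨p, hp, rfl⟩ _ ⟨q, hq, rfl⟩ hne
    have hpq : p ≠ q := by rintro rfl; exact hne rfl
    refine ⟨fun h => ?_, fun h => ?_, fun h => ?_, fun h => ?_⟩
    · exact hmatch p hp q hq hpq _ ⟨Or.inl rfl, Or.inl h.symm⟩
    · exact hmatch p hp q hq hpq _ ⟨Or.inl rfl, Or.inr h.symm⟩
    · exact hmatch p hp q hq hpq _ ⟨Or.inr rfl, Or.inl h.symm⟩
    · exact hmatch p hp q hq hpq _ ⟨Or.inr rfl, Or.inr h.symm⟩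
  · simp only [mem_image]
    rintro _ ⟨p, hp, rfl⟩ _ ⟨q, hq, rfl⟩ ⟨h₁, h₂, h₃⟩
    exact S.noncross p (hQ p hp) q (hQ q hq)
      ⟨Nat.lt_of_div_lt_div h₁, Nat.lt_of_div_lt_div h₂, Nat.lt_of_div_lt_div h₃⟩

/-- The `k` preimages fill the blocks of `q.1` and `q.2` and, being non-crossing, are nested. -/
lemma filter_divPair_eq_stutterCell (S : SecStr) {k : ℕ} (hk : 0 < k) {q : ℕ × ℕ}
    (hq : q.1 < q.2) (hcard : k ≤ #(S.pairs.filter (divPair k · = q))) :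
    S.pairs.filter (divPair k · = q) = stutterCell k q := by
  set A := S.pairs.filter (divPair k · = q)
  have hmem : ∀ p ∈ A, p ∈ S.pairs ∧ p.1 ∈ Ico (k * q.1) (k * q.1 + k) ∧
      p.2 ∈ Ico (k * q.2) (k * q.2 + k) := by
    intro p hp
    obtain ⟨hp, hpq⟩ := mem_filter.1 hp
    simp only [divPair, Prod.ext_iff, Nat.div_eq_iff hk] at hpq
    simp only [mem_Ico, mul_comm k]
    exact ⟨hp, by omega, by omega⟩
  have hinj : ∀ p ∈ A, ∀ p' ∈ A, p ≠ p' → p.1 ≠ p'.1 ∧ p.2 ≠ p'.2 := fun p hp p' hp' hne =>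
    have h := S.once p (hmem p hp).1 p' (hmem p' hp').1 hne
    ⟨h.1, h.2.2.2⟩
  have hanti : ∀ p ∈ A, ∀ p' ∈ A, p.1 < p'.1 → p'.2 < p.2 := by
    intro p hp p' hp' hlt
    have hblocks : k * q.1 + k ≤ k * q.2 := by nlinarith
    have hne := (hinj p hp p' hp' (by rintro rfl; exact lt_irrefl _ hlt)).2
    have hcross := S.noncross p (hmem p hp).1 p' (hmem p' hp').1
    obtain ⟨-, hp₁, hp₂⟩ := hmem p hp
    obtain ⟨-, hp'₁, hp'₂⟩ := hmem p' hp'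
    rw [mem_Ico] at hp₁ hp₂ hp'₁ hp'₂
    omega
  have hfst : Set.InjOn Prod.fst (A : Set (ℕ × ℕ)) := fun p hp p' hp' h =>
    by_contra fun hne => (hinj p hp p' hp' hne).1 h
  have hsnd : Set.InjOn Prod.snd (A : Set (ℕ × ℕ)) := fun p hp p' hp' h =>
    by_contra fun hne => (hinj p hp p' hp' hne).2 h
  have himage₁ := image_eq_Ico_of_injOn hfst (fun p hp => (hmem p hp).2.1) hcard
  have himage₂ := image_eq_Ico_of_injOn hsnd (fun p hp => (hmem p hp).2.2) hcard
  refine eq_of_subset_of_card_le (fun r hr => ?_) (by rw [card_stutterCell]; exact hcard)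
  have hr₁ := mem_Ico.1 (hmem r hr).2.1
  have hr₂ := add_eq_of_image_eq_Ico hfst himage₁ himage₂ hanti hr
  refine mem_image.2 ⟨r.1 - k * q.1, mem_range.2 (by omega), Prod.ext ?_ ?_⟩ <;> dsimp only <;>
    omega

lemma pairs_eq_stutterPairs (S' S : SecStr) {k : ℕ} (hk : 0 < k) (c : ℕ × ℕ → Fin k)
    (hc : ∀ γ, (S'.pairs.filter (c · = γ)).image (divPair k) = S.pairs) :
    S'.pairs = stutterPairs S k := by
  have hfiber : ∀ q ∈ S.pairs, S'.pairs.filter (divPair k · = q) = stutterCell k q := by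
    refine fun q hq => S'.filter_divPair_eq_stutterCell hk (S.lt q hq) ?_
    calc k = #(univ : Finset (Fin k)) := by simp
      _ ≤ _ := card_le_card_of_surjOn c fun γ _ => by
        obtain ⟨p, hp, hpq⟩ := mem_image.1 ((hc γ).symm ▸ hq)
        exact ⟨p, mem_filter.2 ⟨(mem_filter.1 hp).1, hpq⟩, (mem_filter.1 hp).2⟩
  ext r
  rw [stutterPairs_eq_biUnion, mem_biUnion]
  constructor
  · intro hr
    have hq : divPair k r ∈ S.pairs := hc (c r) ▸ mem_image_of_mem _ (mem_filter.2 ⟨hr, rfl⟩)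
    exact ⟨_, hq, hfiber _ hq ▸ mem_filter.2 ⟨hr, rfl⟩⟩
  · rintro ⟨q, hq, hr⟩
    rw [← hfiber q hq] at hr
    exact (mem_filter.1 hr).1

end SecStr

lemma exists_decomposition_of_compat_stutterSeq {α : Type*} [Inhabited α] {R : α → α → Prop}
    (hR : Bipartite R) (E : α → α → ℝ) {w : List α} {k : ℕ} (hk : 0 < k) {S' : SecStr}
    (hS' : compat R (stutterSeq w k) S') :
    ∃ (c : ℕ × ℕ → Fin k) (T : Fin k → SecStr),
      (∀ γ, compat R w (T γ) ∧ (T γ).pairs = (S'.pairs.filter (c · = γ)).image (divPair k)) ∧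
      energy E (stutterSeq w k) S' = ∑ γ, energy E w (T γ) := by
  obtain ⟨f, hf⟩ := hR
  obtain ⟨hlen, hpairR⟩ := (compat_stutterSeq_iff hk).1 hS'
  have hside : ∀ p ∈ S'.pairs,
      f (w.getD (divPair k p).1 default) ≠ f (w.getD (divPair k p).2 default) :=
    fun p hp => hf _ _ (hpairR p hp)
  obtain ⟨c, hc⟩ := exists_isProperEdgeColoring hk (fun x => f (w.getD x default)) S'.pairs
    hside (S'.card_filter_incident_divPair_le hk)
  have hloop : ∀ p ∈ S'.pairs, (divPair k p).1 ≠ (divPair k p).2 :=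
    fun p hp h => hside p hp (by rw [h])
  choose T hTlen hTpairs using S'.exists_pairs_eq_image_filter hlen hc hloop
  refine ⟨c, T, fun γ => ⟨⟨hTlen γ, ?_⟩, hTpairs γ⟩, ?_⟩
  · rw [hTpairs]
    simp only [mem_image]
    rintro _ ⟨p, hp, rfl⟩
    exact hpairR p (mem_filter.1 hp).1
  · rw [energy_stutterSeq E w hk, ← sum_fiberwise S'.pairs c]
    refine sum_congr rfl fun γ _ => ?_
    rw [energy, hTpairs, sum_image (hc.injOn_filter γ)]

lemma card_mul_add_le_sum {ι : Type*} [Fintype ι] {f : ι → ℝ} {a Δ : ℝ}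
    (h : ∀ i, a ≤ f i) {i₀ : ι} (h₀ : a + Δ ≤ f i₀) : Fintype.card ι * a + Δ ≤ ∑ i, f i := by
  calc Fintype.card ι * a + Δ = ∑ i, (a + if i = i₀ then Δ else 0) := by
        simp [sum_add_distrib]
    _ ≤ ∑ i, f i := sum_le_sum fun i _ => by
        split_ifs with hi
        · exact hi ▸ h₀
        · simpa using h i

/-- in any bipartite base-pair-sum energy model, if w is a
Δ-design for S then the k-stutter of w is a Δ-design for the k-stutter of S. -/
theorem stmt15 {α : Type*} [Inhabited α] (R : α → α → Prop) (E : α → α → ℝ)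
    (Δ : ℝ) (hΔ : 0 < Δ) (hbip : Bipartite R) (w : List α) (S : SecStr)
    (hdes : isDesign R E Δ w S) (k : ℕ) (hk : 1 ≤ k)
    (Sk : SecStr) (hlen : Sk.len = k * S.len) (hpairs : Sk.pairs = stutterPairs S k) :
    isDesign R E Δ (stutterSeq w k) Sk := by
  obtain ⟨hS, hSmin⟩ := hdes
  refine ⟨compat_stutterSeq_of_pairs_eq hk hS hlen hpairs, fun S' hS' hne => ?_⟩
  obtain ⟨c, T, hT, henergy⟩ := exists_decomposition_of_compat_stutterSeq hbip E hk hS'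
  have hle : ∀ γ, energy E w S ≤ energy E w (T γ) := fun γ => by
    by_cases h : T γ = S
    · rw [h]
    · linarith [hSmin (T γ) (hT γ).1 h]
  obtain ⟨γ, hγ⟩ : ∃ γ, T γ ≠ S := by
    by_contra! hall
    refine hne (SecStr.ext ?_ ?_)
    · rw [hS'.1, hlen, hS.1, length_stutterSeq]
    · rw [hpairs]
      exact S'.pairs_eq_stutterPairs S hk c fun γ => by rw [← (hT γ).2, hall γ]
  rw [henergy, energy_stutterSeq_of_pairs_eq E w hk hpairs]
  simpa using card_mul_add_le_sum hle (hSmin (T γ) (hT γ).1 hγ)
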